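/- For any vertex u of FDSC_n (n = 2^d, d ≥ 2), there exist three neighbors p, q, r of u inducing a triangle K_3, and the remaining d − 1 neighbors of u form an independent set. -/

import Mathlib

open scoped Classical

namespace FDSC

/-- Vertices of `FDSC_n` with `n = 2^d`: binary strings of length `2^d`. -/
abbrev V (d : ℕ) : Type := Fin (2 ^ d) → Bool

/-- Bit `i` of a vertex (out-of-range bits are `false`). -/
def get {d : ℕ} (u : V d) (i : ℕ) : Bool :=
  if h : i < 2 ^ d then u ⟨i, h⟩ else false

def ofFun {d : ℕ} (f : ℕ → Bool) : V d := fun i => f i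

/-- Flip bit `i`. -/
def flip {d : ℕ} (i : ℕ) (u : V d) : V d :=
  ofFun (fun j => if j = i then !(get u j) else get u j)

/-- The two initial blocks of length `L` coincide (`m₁ = m₂`). -/
def sameHalves {d : ℕ} (L : ℕ) (u : V d) : Prop :=
  ∀ i < L, get u i = get u (i + L)

/-- Swap the two initial blocks of length `L` (`m₂ m₁ m₃`). -/
def swapHalves {d : ℕ} (L : ℕ) (u : V d) : V d :=
  ofFun (fun i => if i < L then get u (i + L)
    else if i < 2 * L then get u (i - L) else get u i)

/-- Complement the two initial blocks of length `L` (`m̄₁ m̄₂ m₃`). -/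
def complHalves {d : ℕ} (L : ℕ) (u : V d) : V d :=
  ofFun (fun i => if i < 2 * L then !(get u i) else get u i)

/-- Divide-and-swap neighbor for block length `L`. -/
noncomputable def dsNeighbor {d : ℕ} (L : ℕ) (u : V d) : V d :=
  if sameHalves L u then complHalves L u else swapHalves L u

/-- Adjacency in `FDSC_n`: the `e(1)`-edge (flip first bit), the `e(f)`-edge
(flip second bit), and the `e(2n/2^k)`-edges for `1 ≤ k ≤ d`. -/
def PreAdj {d : ℕ} (u v : V d) : Prop :=
  u ≠ v ∧ (v = flip 0 u ∨ v = flip 1 u ∨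
    ∃ k, 1 ≤ k ∧ k ≤ d ∧ v = dsNeighbor (2 ^ (d - k)) u)

/-- The folded divide-and-swap cube `FDSC_n`, `n = 2^d`. -/
noncomputable def graph (d : ℕ) : SimpleGraph (V d) where
  Adj u v := PreAdj u v ∨ PreAdj v u
  symm := ⟨fun _ _ h => h.symm⟩
  loopless := ⟨fun u h => by
    rcases h with h | h <;> exact h.1 rfl⟩

/-- Module addresses: binary strings of length `n/2 = 2^(d-1)`. -/
abbrev W (d : ℕ) : Type := Fin (2 ^ (d - 1)) → Bool

def getW {d : ℕ} (B : W d) (i : ℕ) : Bool :=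
  if h : i < 2 ^ (d - 1) then B ⟨i, h⟩ else false

/-- The vertex `A B` (inside-address `A`, module address `B`). -/
def concat {d : ℕ} (A B : W d) : V d :=
  ofFun (fun i => if i < 2 ^ (d - 1) then getW A i else getW B (i - 2 ^ (d - 1)))

/-- The module address of a vertex (its second half). -/
def secondHalf {d : ℕ} (u : V d) : W d :=
  fun i => get u ((i : ℕ) + 2 ^ (d - 1))

/-- Bitwise complement of a module address. -/
def complW {d : ℕ} (B : W d) : W d := fun i => !(B i)

/-- The external neighbor of a vertex: the `e(n)`-edge endpoint (`k = 1`). -/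
noncomputable def extNeighbor {d : ℕ} (u : V d) : V d :=
  dsNeighbor (2 ^ (d - 1)) u

/-- The star `K_{1,m}` with center `0`. -/
def star (m : ℕ) : SimpleGraph (Fin (m + 1)) where
  Adj i j := (i = 0 ∧ j ≠ 0) ∨ (j = 0 ∧ i ≠ 0)
  symm := ⟨fun _ _ h => h.symm⟩
  loopless := ⟨fun i h => by
    rcases h with ⟨h1, h2⟩ | ⟨h1, h2⟩ <;> exact h2 h1⟩

/-- Deleting the vertex set `R` disconnects the graph or leaves a trivial graph. -/
def Disconnects {α : Type*} (G : SimpleGraph α) (R : Set α) : Prop :=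
  ¬ (G.induce Rᶜ).Connected ∨ Rᶜ.Subsingleton

/-- `H`-structure connectivity: minimum number of subgraphs of `G`, each
isomorphic to `H`, whose vertex deletion disconnects `G` or leaves a trivial graph. -/
noncomputable def structConn {α β : Type*} (G : SimpleGraph α) (H : SimpleGraph β) : ℕ :=
  sInf { k | ∃ F : Finset G.Subgraph, F.card = k ∧
    (∀ S ∈ F, Nonempty (S.coe ≃g H)) ∧
    Disconnects G (⋃ S ∈ F, S.verts) }

/-- `H`-substructure connectivity: members are isomorphic to connected subgraphs of `H`. -/
noncomputable def substructConn {α β : Type*} (G : SimpleGraph α) (H : SimpleGraph β) : ℕ :=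
  sInf { k | ∃ F : Finset G.Subgraph, F.card = k ∧
    (∀ S ∈ F, S.coe.Connected ∧ ∃ H' : H.Subgraph, Nonempty (S.coe ≃g H'.coe)) ∧
    Disconnects G (⋃ S ∈ F, S.verts) }

/-! ### Auxiliary lemmas -/

lemma get_lt {d : ℕ} (u : V d) {i : ℕ} (h : i < 2 ^ d) : get u i = u ⟨i, h⟩ :=
  dif_pos h

lemma get_ge {d : ℕ} (u : V d) {i : ℕ} (h : ¬ i < 2 ^ d) : get u i = false :=
  dif_neg h

lemma V.ext {d : ℕ} {u v : V d} (h : ∀ i, get u i = get v i) : u = v := by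
  funext i
  have := h i
  rwa [get_lt u i.isLt, get_lt v i.isLt] at this

lemma get_ofFun {d : ℕ} (f : ℕ → Bool) (i : ℕ) :
    get (ofFun (d := d) f) i = if i < 2 ^ d then f i else false := by
  unfold get ofFun; split <;> simp_all

lemma get_flip {d : ℕ} (k : ℕ) (u : V d) (i : ℕ) (hi : i < 2 ^ d) :
    get (flip k u) i = if i = k then !(get u i) else get u i := by
  rw [flip, get_ofFun, if_pos hi]

lemma get_flip_ne {d : ℕ} (k : ℕ) (u : V d) (i : ℕ) (hik : i ≠ k) :
    get (flip k u) i = get u i := by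
  by_cases hi : i < 2 ^ d
  · rw [get_flip k u i hi, if_neg hik]
  · rw [get_ge _ hi, get_ge _ hi]

lemma flip_flip {d : ℕ} (k : ℕ) (u : V d) : flip k (flip k u) = u := by
  apply V.ext
  intro i
  by_cases hi : i < 2 ^ d
  · rw [get_flip k _ i hi, get_flip k u i hi]
    by_cases h : i = k <;> simp [h]
  · rw [get_ge _ hi, get_ge _ hi]

lemma get_ds_of_ge {d L : ℕ} (u : V d) {i : ℕ} (h : 2 * L ≤ i) :
    get (dsNeighbor L u) i = get u i := by
  by_cases hi : i < 2 ^ d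
  · have h1 : ¬ i < L := by omega
    have h2 : ¬ i < 2 * L := by omega
    unfold dsNeighbor
    split
    · rw [complHalves, get_ofFun, if_pos hi, if_neg h2]
    · rw [swapHalves, get_ofFun, if_pos hi, if_neg h1, if_neg h2]
  · rw [get_ge _ hi, get_ge _ hi]

lemma ds_exists_diff {d L : ℕ} (u : V d) (hL : 1 ≤ L) (h2L : 2 * L ≤ 2 ^ d) :
    ∃ i, L ≤ i ∧ i < 2 * L ∧ get (dsNeighbor L u) i ≠ get u i := by
  unfold dsNeighbor
  split
  · refine ⟨L, le_refl _, by omega, ?_⟩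
    rw [complHalves, get_ofFun, if_pos (by omega), if_pos (by omega)]
    simp
  · rename_i hs
    rw [sameHalves] at hs
    push_neg at hs
    obtain ⟨i0, hi0, hne⟩ := hs
    refine ⟨i0 + L, by omega, by omega, ?_⟩
    rw [swapHalves, get_ofFun, if_pos (by omega), if_neg (by omega),
      if_pos (by omega)]
    simpa using hne

lemma ds_ne_self {d L : ℕ} (u : V d) (hL : 1 ≤ L) (h2L : 2 * L ≤ 2 ^ d) :
    dsNeighbor L u ≠ u := by
  obtain ⟨i, _, _, hne⟩ := ds_exists_diff u hL h2L
  exact fun h => hne (by rw [h])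

lemma ds_involutive {d L : ℕ} (u : V d) (h2L : 2 * L ≤ 2 ^ d) :
    dsNeighbor L (dsNeighbor L u) = u := by
  by_cases hs : sameHalves L u
  · have h1 : dsNeighbor L u = complHalves L u := if_pos hs
    have hs' : sameHalves L (complHalves L u) := by
      intro i hi
      rw [complHalves, get_ofFun, get_ofFun, if_pos (by omega), if_pos (by omega),
        if_pos (by omega), if_pos (by omega)]
      rw [hs i hi]
    rw [h1, dsNeighbor, if_pos hs']
    apply V.ext
    intro i
    by_cases hi : i < 2 ^ d
    · rw [complHalves, get_ofFun, if_pos hi]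
      by_cases hi2 : i < 2 * L
      · rw [if_pos hi2, complHalves, get_ofFun, if_pos hi, if_pos hi2, Bool.not_not]
      · rw [if_neg hi2, complHalves, get_ofFun, if_pos hi, if_neg hi2]
    · rw [get_ge _ hi, get_ge _ hi]
  · have h1 : dsNeighbor L u = swapHalves L u := if_neg hs
    rw [sameHalves] at hs
    push_neg at hs
    obtain ⟨i0, hi0, hne⟩ := hs
    have hs' : ¬ sameHalves L (swapHalves L u) := by
      intro h
      have := h i0 hi0
      rw [swapHalves, get_ofFun, get_ofFun, if_pos (by omega), if_pos (by omega),
        if_pos (by omega), if_neg (by omega), if_pos (by omega)] at this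
      simp only [Nat.add_sub_cancel] at this
      exact hne this.symm
    rw [h1, dsNeighbor, if_neg hs']
    apply V.ext
    intro i
    by_cases hi : i < 2 ^ d
    · rw [swapHalves, get_ofFun, if_pos hi]
      by_cases c1 : i < L
      · rw [if_pos c1, swapHalves, get_ofFun, if_pos (by omega), if_neg (by omega),
          if_pos (by omega)]
        simp
      · rw [if_neg c1]
        by_cases c2 : i < 2 * L
        · rw [if_pos c2, swapHalves, get_ofFun, if_pos (by omega), if_pos (by omega)]
          congr 1
          omega
        · rw [if_neg c2, swapHalves, get_ofFun, if_pos hi, if_neg c1, if_neg c2]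
    · rw [get_ge _ hi, get_ge _ hi]

lemma get_ds_one {d : ℕ} (u : V d) (hd : 2 ≤ 2 ^ d) (i : ℕ) :
    get (dsNeighbor 1 u) i =
      if i = 0 then !(get u 0) else if i = 1 then !(get u 1) else get u i := by
  by_cases hi : i < 2 ^ d
  · unfold dsNeighbor
    split
    · rename_i hs
      have h01 : get u 0 = get u 1 := by simpa using hs 0 (by omega)
      rw [complHalves, get_ofFun, if_pos hi]
      by_cases h0 : i = 0
      · subst h0; simp
      · by_cases h1 : i = 1
        · subst h1; simp
        · rw [if_neg (by omega), if_neg h0, if_neg h1]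
    · rename_i hs
      rw [sameHalves] at hs
      push_neg at hs
      obtain ⟨i0, hi0, hne⟩ := hs
      interval_cases i0
      simp only [zero_add] at hne
      rw [swapHalves, get_ofFun, if_pos hi]
      by_cases h0 : i = 0
      · subst h0
        simp only [if_pos (by omega : (0:ℕ) < 1), zero_add, if_pos rfl]
        cases hb : get u 0 <;> cases hb' : get u 1 <;> simp_all
      · by_cases h1 : i = 1
        · subst h1
          rw [if_neg (by omega), if_pos (by omega)]
          simp only [Nat.sub_self, if_neg h0, if_pos rfl]
          cases hb : get u 0 <;> cases hb' : get u 1 <;> simp_all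
        · rw [if_neg (by omega), if_neg (by omega), if_neg h0, if_neg h1]
  · rw [get_ge _ hi]
    have h0 : i ≠ 0 := by omega
    have h1 : i ≠ 1 := by omega
    rw [if_neg h0, if_neg h1, get_ge _ hi]

lemma ds_one_eq_flip01 {d : ℕ} (u : V d) (hd : 2 ≤ 2 ^ d) :
    dsNeighbor 1 u = flip 0 (flip 1 u) := by
  apply V.ext
  intro i
  rw [get_ds_one u hd i]
  by_cases hi : i < 2 ^ d
  · by_cases h0 : i = 0
    · subst h0; simp [get_flip, hi]
    · by_cases h1 : i = 1
      · subst h1; simp [get_flip, hi]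
      · simp [get_flip, hi, h0, h1]
  · rw [if_neg (show i ≠ 0 by omega), if_neg (show i ≠ 1 by omega),
      get_ge _ hi, get_ge _ hi]

lemma ds_one_eq_flip10 {d : ℕ} (u : V d) (hd : 2 ≤ 2 ^ d) :
    dsNeighbor 1 u = flip 1 (flip 0 u) := by
  apply V.ext
  intro i
  rw [get_ds_one u hd i]
  by_cases hi : i < 2 ^ d
  · by_cases h0 : i = 0
    · subst h0; simp [get_flip, hi]
    · by_cases h1 : i = 1
      · subst h1; simp [get_flip, hi]
      · simp [get_flip, hi, h0, h1]
  · rw [if_neg (show i ≠ 0 by omega), if_neg (show i ≠ 1 by omega),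
      get_ge _ hi, get_ge _ hi]

lemma pow_two_le {d k : ℕ} (hk1 : 1 ≤ k) (hk : k ≤ d) : 2 * 2 ^ (d - k) ≤ 2 ^ d := by
  calc 2 * 2 ^ (d - k) = 2 ^ (d - k + 1) := by rw [pow_succ]; ring
    _ ≤ 2 ^ d := Nat.pow_le_pow_right (by norm_num) (by omega)

lemma adj_iff {d : ℕ} {u v : V d} (hd : 1 ≤ d) :
    (graph d).Adj u v ↔ u ≠ v ∧ (v = flip 0 u ∨ v = flip 1 u ∨
      ∃ k, 1 ≤ k ∧ k ≤ d ∧ v = dsNeighbor (2 ^ (d - k)) u) := by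
  have key : ∀ w z : V d, PreAdj w z →
      z = flip 0 w ∨ z = flip 1 w ∨
        ∃ k, 1 ≤ k ∧ k ≤ d ∧ z = dsNeighbor (2 ^ (d - k)) w := fun w z h => h.2
  constructor
  · rintro (h | h)
    · exact ⟨h.1, key u v h⟩
    · refine ⟨fun he => h.1 he.symm, ?_⟩
      rcases key v u h with h' | h' | ⟨k, hk1, hkd, h'⟩
      · exact Or.inl (by rw [h', flip_flip])
      · exact Or.inr (Or.inl (by rw [h', flip_flip]))
      · refine Or.inr (Or.inr ⟨k, hk1, hkd, ?_⟩)
        rw [h', ds_involutive v (pow_two_le hk1 hkd)]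
  · rintro ⟨hne, h⟩
    exact Or.inl ⟨hne, h⟩


lemma two_mul_pow_le {d k j : ℕ} (hkj : k < j) (hjd : j ≤ d) :
    2 * 2 ^ (d - j) ≤ 2 ^ (d - k) := by
  calc 2 * 2 ^ (d - j) = 2 ^ (d - j + 1) := by rw [pow_succ]; ring
    _ ≤ 2 ^ (d - k) := Nat.pow_le_pow_right (by norm_num) (by omega)

lemma one_le_pow' (d k : ℕ) : 1 ≤ 2 ^ (d - k) := Nat.one_le_two_pow

lemma vk_ne_vj {d k j : ℕ} (u : V d) (hk1 : 1 ≤ k) (hkj : k < j) (hjd : j ≤ d) :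
    dsNeighbor (2 ^ (d - k)) u ≠ dsNeighbor (2 ^ (d - j)) u := by
  obtain ⟨i, hi1, hi2, hne⟩ :=
    ds_exists_diff u (one_le_pow' d k) (pow_two_le hk1 (by omega))
  intro h
  apply hne
  rw [h, get_ds_of_ge u (le_trans (two_mul_pow_le hkj hjd) hi1)]

lemma ne_flip {d : ℕ} (u : V d) (k : ℕ) (hk : k < 2 ^ d) : u ≠ flip k u := by
  intro h
  have h2 : get u k = get (flip k u) k := by rw [← h]
  rw [get_flip k u k hk, if_pos rfl] at h2
  simp at h2

lemma not_adj_vk_vj {d k j : ℕ} (u : V d) (hk1 : 1 ≤ k) (hkj : k < j)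
    (hjd : j ≤ d - 1) (hd : 2 ≤ d) :
    ¬ (graph d).Adj (dsNeighbor (2 ^ (d - k)) u) (dsNeighbor (2 ^ (d - j)) u) := by
  have hkd : k ≤ d := by omega
  have hjd' : j ≤ d := by omega
  have hL2 : 2 ≤ 2 ^ (d - k) := by
    calc (2:ℕ) = 2 ^ 1 := rfl
      _ ≤ 2 ^ (d - k) := Nat.pow_le_pow_right (by norm_num) (by omega)
  intro hadj
  rw [adj_iff (by omega)] at hadj
  obtain ⟨hne, hcase⟩ := hadj
  obtain ⟨i, hi1, hi2, hine⟩ :=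
    ds_exists_diff u (one_le_pow' d k) (pow_two_le hk1 hkd)
  have hvj : get (dsNeighbor (2 ^ (d - j)) u) i = get u i :=
    get_ds_of_ge u (le_trans (two_mul_pow_le hkj hjd') hi1)
  have hxy : get (dsNeighbor (2 ^ (d - k)) u) i ≠ get (dsNeighbor (2 ^ (d - j)) u) i := by
    rw [hvj]; exact hine
  rcases hcase with h | h | ⟨m, hm1, hmd, h⟩
  · exact hxy (by rw [h, get_flip_ne 0 _ i (by omega)])
  · exact hxy (by rw [h, get_flip_ne 1 _ i (by omega)])
  · rcases lt_trichotomy m k with hmk | hmk | hmk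
    · -- m < k : N ≥ 2L
      obtain ⟨i', hi'1, hi'2, hi'ne⟩ :=
        ds_exists_diff (dsNeighbor (2 ^ (d - k)) u) (one_le_pow' d m)
          (pow_two_le hm1 hmd)
      have h2L : 2 * 2 ^ (d - k) ≤ 2 ^ (d - m) := two_mul_pow_le hmk hkd
      have hvk : get (dsNeighbor (2 ^ (d - k)) u) i' = get u i' :=
        get_ds_of_ge u (le_trans h2L hi'1)
      have hvj' : get (dsNeighbor (2 ^ (d - j)) u) i' = get u i' :=
        get_ds_of_ge u (le_trans (le_trans (two_mul_pow_le hkj hjd')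
          (le_trans (Nat.le_mul_of_pos_left _ (by norm_num)) h2L)) hi'1)
      apply hi'ne
      rw [← h, hvj', hvk]
    · -- m = k : v_j = u, contradiction with v_j ≠ u
      subst hmk
      rw [ds_involutive u (pow_two_le hm1 hmd)] at h
      exact ds_ne_self u (one_le_pow' d j) (pow_two_le (by omega) hjd') h
    · -- m > k : 2N ≤ L ≤ i
      apply hxy
      rw [h, get_ds_of_ge _ (le_trans (two_mul_pow_le hmk hmd) hi1)]

/-- every vertex `u` has three neighbors inducing `K₃`, and its
remaining `d - 1` neighbors form an independent set. -/
theorem stmt10 (d : ℕ) (hd : 2 ≤ d) (u : V d) :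
    ∃ p q r : V d,
      p ∈ (graph d).neighborSet u ∧ q ∈ (graph d).neighborSet u ∧
      r ∈ (graph d).neighborSet u ∧
      p ≠ q ∧ p ≠ r ∧ q ≠ r ∧
      (graph d).Adj p q ∧ (graph d).Adj p r ∧ (graph d).Adj q r ∧
      (∀ x ∈ (graph d).neighborSet u \ {p, q, r},
        ∀ y ∈ (graph d).neighborSet u \ {p, q, r}, ¬ (graph d).Adj x y) ∧
      ((graph d).neighborSet u \ {p, q, r}).ncard = d - 1 := by
  have hd1 : 1 ≤ d := by omega
  have h2d : 2 ≤ 2 ^ d := by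
    calc (2:ℕ) = 2 ^ 1 := rfl
      _ ≤ 2 ^ d := Nat.pow_le_pow_right (by norm_num) hd1
  have h0d : (0:ℕ) < 2 ^ d := by omega
  have h1d : (1:ℕ) < 2 ^ d := by omega
  refine ⟨flip 0 u, flip 1 u, dsNeighbor 1 u, ?_, ?_, ?_, ?_, ?_, ?_, ?_, ?_, ?_, ?_, ?_⟩
  · exact Or.inl ⟨ne_flip u 0 h0d, Or.inl rfl⟩
  · exact Or.inl ⟨ne_flip u 1 h1d, Or.inr (Or.inl rfl)⟩
  · refine Or.inl ⟨(ds_ne_self u le_rfl (by omega)).symm,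
      Or.inr (Or.inr ⟨d, hd1, le_rfl, by rw [Nat.sub_self, pow_zero]⟩)⟩
  · -- p ≠ q
    intro h
    have h2 : get (flip 0 u) 0 = get (flip 1 u) 0 := by rw [h]
    rw [get_flip 0 u 0 h0d, if_pos rfl, get_flip_ne 1 u 0 (by omega)] at h2
    simp at h2
  · -- p ≠ r
    intro h
    have h2 : get (flip 0 u) 1 = get (dsNeighbor 1 u) 1 := by rw [h]
    rw [get_flip_ne 0 u 1 (by omega), get_ds_one u h2d 1,
      if_neg (by omega), if_pos rfl] at h2
    simp at h2
  · -- q ≠ r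
    intro h
    have h2 : get (flip 1 u) 0 = get (dsNeighbor 1 u) 0 := by rw [h]
    rw [get_flip_ne 1 u 0 (by omega), get_ds_one u h2d 0, if_pos rfl] at h2
    simp at h2
  · -- Adj p q : q = dsNeighbor 1 p
    refine Or.inl ⟨?_, Or.inr (Or.inr ⟨d, hd1, le_rfl, ?_⟩)⟩
    · intro h
      have h2 : get (flip 0 u) 0 = get (flip 1 u) 0 := by rw [h]
      rw [get_flip 0 u 0 h0d, if_pos rfl, get_flip_ne 1 u 0 (by omega)] at h2
      simp at h2
    · rw [Nat.sub_self, pow_zero, ds_one_eq_flip10 (flip 0 u) h2d, flip_flip]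
  · -- Adj p r : r = flip 1 p
    refine Or.inl ⟨?_, Or.inr (Or.inl ?_)⟩
    · intro h
      have h2 : get (flip 0 u) 1 = get (dsNeighbor 1 u) 1 := by rw [h]
      rw [get_flip_ne 0 u 1 (by omega), get_ds_one u h2d 1,
        if_neg (by omega), if_pos rfl] at h2
      simp at h2
    · exact ds_one_eq_flip10 u h2d
  · -- Adj q r : r = flip 0 q
    refine Or.inl ⟨?_, Or.inl ?_⟩
    · intro h
      have h2 : get (flip 1 u) 0 = get (dsNeighbor 1 u) 0 := by rw [h]
      rw [get_flip_ne 1 u 0 (by omega), get_ds_one u h2d 0, if_pos rfl] at h2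
      simp at h2
    · exact ds_one_eq_flip01 u h2d
  · -- independence
    have hset : (graph d).neighborSet u \ {flip 0 u, flip 1 u, dsNeighbor 1 u} =
        (fun k => dsNeighbor (2 ^ (d - k)) u) '' Set.Icc 1 (d - 1) := by
      ext x
      simp only [Set.mem_diff, SimpleGraph.mem_neighborSet, Set.mem_insert_iff,
        Set.mem_singleton_iff, Set.mem_image, Set.mem_Icc]
      constructor
      · rintro ⟨hadj, hnot⟩
        push_neg at hnot
        rw [adj_iff hd1] at hadj
        obtain ⟨hne, h | h | ⟨k, hk1, hkd, h⟩⟩ := hadj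
        · exact absurd h hnot.1
        · exact absurd h hnot.2.1
        · by_cases hkd' : k = d
          · subst hkd'
            rw [Nat.sub_self, pow_zero] at h
            exact absurd h hnot.2.2
          · exact ⟨k, ⟨hk1, by omega⟩, h.symm⟩
      · rintro ⟨k, ⟨hk1, hkd⟩, rfl⟩
        have hkd2 : k ≤ d := by omega
        have hL2 : 2 ≤ 2 ^ (d - k) := by
          calc (2:ℕ) = 2 ^ 1 := rfl
            _ ≤ 2 ^ (d - k) := Nat.pow_le_pow_right (by norm_num) (by omega)
        obtain ⟨i, hi1, hi2, hine⟩ :=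
          ds_exists_diff u (one_le_pow' d k) (pow_two_le hk1 hkd2)
        refine ⟨Or.inl ⟨(ds_ne_self u (one_le_pow' d k) (pow_two_le hk1 hkd2)).symm,
          Or.inr (Or.inr ⟨k, hk1, hkd2, rfl⟩)⟩, ?_⟩
        push_neg
        refine ⟨?_, ?_, ?_⟩
        · intro h
          exact hine (by rw [h, get_flip_ne 0 u i (by omega)])
        · intro h
          exact hine (by rw [h, get_flip_ne 1 u i (by omega)])
        · intro h
          exact hine (by rw [h, get_ds_one u h2d i, if_neg (by omega),
            if_neg (by omega)])
    intro x hx y hy hadj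
    rw [hset] at hx hy
    obtain ⟨k, ⟨hk1, hkd⟩, rfl⟩ := hx
    obtain ⟨j, ⟨hj1, hjd⟩, rfl⟩ := hy
    rcases lt_trichotomy k j with hkj | hkj | hkj
    · exact not_adj_vk_vj u hk1 hkj hjd hd hadj
    · subst hkj
      exact (graph d).loopless.irrefl _ hadj
    · exact not_adj_vk_vj u hj1 hkj hkd hd hadj.symm
  · -- cardinality
    have hset : (graph d).neighborSet u \ {flip 0 u, flip 1 u, dsNeighbor 1 u} =
        (fun k => dsNeighbor (2 ^ (d - k)) u) '' Set.Icc 1 (d - 1) := by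
      ext x
      simp only [Set.mem_diff, SimpleGraph.mem_neighborSet, Set.mem_insert_iff,
        Set.mem_singleton_iff, Set.mem_image, Set.mem_Icc]
      constructor
      · rintro ⟨hadj, hnot⟩
        push_neg at hnot
        rw [adj_iff hd1] at hadj
        obtain ⟨hne, h | h | ⟨k, hk1, hkd, h⟩⟩ := hadj
        · exact absurd h hnot.1
        · exact absurd h hnot.2.1
        · by_cases hkd' : k = d
          · subst hkd'
            rw [Nat.sub_self, pow_zero] at h
            exact absurd h hnot.2.2
          · exact ⟨k, ⟨hk1, by omega⟩, h.symm⟩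
      · rintro ⟨k, ⟨hk1, hkd⟩, rfl⟩
        have hkd2 : k ≤ d := by omega
        have hL2 : 2 ≤ 2 ^ (d - k) := by
          calc (2:ℕ) = 2 ^ 1 := rfl
            _ ≤ 2 ^ (d - k) := Nat.pow_le_pow_right (by norm_num) (by omega)
        obtain ⟨i, hi1, hi2, hine⟩ :=
          ds_exists_diff u (one_le_pow' d k) (pow_two_le hk1 hkd2)
        refine ⟨Or.inl ⟨(ds_ne_self u (one_le_pow' d k) (pow_two_le hk1 hkd2)).symm,
          Or.inr (Or.inr ⟨k, hk1, hkd2, rfl⟩)⟩, ?_⟩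
        push_neg
        refine ⟨?_, ?_, ?_⟩
        · intro h
          exact hine (by rw [h, get_flip_ne 0 u i (by omega)])
        · intro h
          exact hine (by rw [h, get_flip_ne 1 u i (by omega)])
        · intro h
          exact hine (by rw [h, get_ds_one u h2d i, if_neg (by omega),
            if_neg (by omega)])
    rw [hset]
    have hinj : Set.InjOn (fun k => dsNeighbor (2 ^ (d - k)) u) (Set.Icc 1 (d - 1)) := by
      intro k hk j hj h
      simp only [Set.mem_Icc] at hk hj
      by_contra hne
      rcases lt_or_gt_of_ne hne with hkj | hkj
      · exact vk_ne_vj u hk.1 hkj (by omega) h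
      · exact vk_ne_vj u hj.1 hkj (by omega) h.symm
    rw [Set.ncard_image_of_injOn hinj, ← Finset.coe_Icc, Set.ncard_coe_finset,
      Nat.card_Icc]
    omega


end FDSC
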